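/- A clockwise Green walk around a finite tree (ribbon graph structure) visits both half-edges of every edge; consequently a clockwise double-stepped Green walk visits exactly one half-edge of each edge of the tree before leaving it. -/

import Mathlib

/-!
A ribbon graph is encoded as a combinatorial map on a finite set `H` of half-edges:
`sigma` is the fixed-point-free involution pairing the two half-edges of each edge,
and `rho` is the permutation whose cycles are the cyclic orderings of the half-edges
around each vertex.  Edges are the orbits of `sigma`, vertices the orbits of `rho`.
The Green walk step sends a half-edge `x` at a vertex `v` to the half-edge `y`
whose opposite half-edge is the successor `rho x` of `x` at `v`, i.e. `y = sigma (rho x)`.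
-/

structure RibbonGraph (H : Type) where
  sigma : Equiv.Perm H
  rho : Equiv.Perm H
  invol : ∀ x, sigma (sigma x) = x
  noFix : ∀ x, sigma x ≠ x
  conn : ∀ x y, Relation.EqvGen (fun a b => sigma a = b ∨ rho a = b) x y

/-- The orbit ("same cycle") setoid of a permutation. -/
def sameCycleSetoid {H : Type} (π : Equiv.Perm H) : Setoid H :=
  ⟨π.SameCycle, ⟨fun x => Equiv.Perm.SameCycle.refl π x, fun h => h.symm,
    fun h₁ h₂ => h₁.trans h₂⟩⟩

namespace RibbonGraph

variable {H : Type}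

/-- The step map of the (anticlockwise) Green walk: `x ↦ sigma (rho x)`. -/
def step (G : RibbonGraph H) : Equiv.Perm H := G.rho.trans G.sigma

/-- The step map of the clockwise Green walk: `x ↦ sigma (rho⁻¹ x)`. -/
def stepC (G : RibbonGraph H) : Equiv.Perm H := G.rho.symm.trans G.sigma

/-- The number of edges: the number of orbits of the involution `sigma`. -/
noncomputable def numEdges (G : RibbonGraph H) : ℕ := Nat.card (Quotient (sameCycleSetoid G.sigma))

/-- The number of vertices: the number of orbits of `rho`. -/
noncomputable def numVertices (G : RibbonGraph H) : ℕ := Nat.card (Quotient (sameCycleSetoid G.rho))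

/-- A (connected) ribbon graph is a tree when `#vertices = #edges + 1`. -/
def IsTree (G : RibbonGraph H) : Prop := G.numVertices = G.numEdges + 1

/-- A half-edge `x` spans a bridge if its edge `{x, sigma x}` disconnects the graph:
there is no walk from `x` to `sigma x` avoiding that edge. -/
def IsBridge (G : RibbonGraph H) (x₀ : H) : Prop :=
  ¬ Relation.ReflTransGen
      (fun a b => G.rho a = b ∨ G.rho b = a ∨ (G.sigma a = b ∧ a ≠ x₀ ∧ a ≠ G.sigma x₀))
      x₀ (G.sigma x₀)

end RibbonGraph

/-! Over a field, the functions on half-edges invariant under `sigma`, resp. `rho`, form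
subspaces of dimensions `#edges` and `#vertices` which, by connectedness, meet only in the
constants. For a tree `#edges + #vertices - 1 = 2 #edges = #half-edges`, so together they
span all functions. If `f` is invariant under the clockwise step then `f ∘ sigma = f ∘ rho`;
writing `f = a + b` with `a` `sigma`-invariant and `b` `rho`-invariant, the function
`a ∘ rho - a = b ∘ sigma - b` is orthogonal to both subspaces, hence zero, and `f` is
constant: the clockwise walk is a single orbit.

Over `ZMod 2`, decomposing a function `c` with `c ∘ sigma = c + 1` the same way gives a
proper 2-colouring `g` of the vertices. It grows by `1` along each step of the walk, so the
double-stepped walk through `x` consists of the half-edges of colour `g x`, and exactly one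
of `y`, `sigma y` has that colour. -/

open Module

namespace Equiv.Perm

variable {H : Type} {K : Type*}

theorem apply_pow_apply_eq_add_nsmul {M : Type*} [AddMonoid M] {π : Perm H} {g : H → M} {c : M}
    (hg : ∀ x, g (π x) = g x + c) (n : ℕ) (x : H) : g ((π ^ n) x) = g x + n • c := by
  induction n with
  | zero => simp
  | succ n ih => rw [pow_succ', mul_apply, hg, ih, succ_nsmul, add_assoc]

variable (K) in
def invariantFunctions [Semiring K] (π : Perm H) : Submodule K (H → K) where
  carrier := {f | ∀ x, f (π x) = f x}
  add_mem' hf hg x := by simp only [Pi.add_apply, hf x, hg x]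
  zero_mem' _ := rfl
  smul_mem' c f hf x := by simp only [Pi.smul_apply, hf x]

@[simp]
theorem mem_invariantFunctions [Semiring K] {π : Perm H} {f : H → K} :
    f ∈ π.invariantFunctions K ↔ ∀ x, f (π x) = f x :=
  Iff.rfl

theorem range_funLeft_mk_eq_invariantFunctions [Semiring K] [Finite H] (π : Perm H) :
    LinearMap.range (LinearMap.funLeft K K (Quotient.mk (sameCycleSetoid π))) =
      π.invariantFunctions K := by
  ext f
  constructor
  · rintro ⟨g, rfl⟩ x
    exact congrArg g (Quotient.sound (SameCycle.refl π x).apply_left)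
  · intro hf
    refine ⟨Quotient.lift f fun x y (hxy : π.SameCycle x y) => ?_, rfl⟩
    obtain ⟨n, rfl⟩ := hxy.exists_nat_pow_eq
    simpa using (apply_pow_apply_eq_add_nsmul (g := f) (c := 0) (by simpa using hf) n x).symm

theorem finrank_invariantFunctions [Field K] [Fintype H] (π : Perm H) :
    finrank K (π.invariantFunctions K) = Nat.card (Quotient (sameCycleSetoid π)) := by
  have : Fintype (Quotient (sameCycleSetoid π)) := Fintype.ofFinite _
  rw [← range_funLeft_mk_eq_invariantFunctions,
    LinearMap.finrank_range_of_inj (LinearMap.funLeft_injective_of_surjective _ _ _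
      Quotient.mk_surjective), finrank_fintype_fun_eq_card, Nat.card_eq_fintype_card]

theorem dotProduct_sub_comp_eq_zero [CommRing K] [Fintype H] {π : Perm H} (f : H → K)
    {u : H → K} (hu : u ∈ π.invariantFunctions K) :
    (fun x => f (π x) - f x) ⬝ᵥ u = 0 := by
  have : ∑ x, f (π x) * u x = ∑ x, f x * u x :=
    calc ∑ x, f (π x) * u x = ∑ x, f (π x) * u (π x) := by
          simp only [mem_invariantFunctions.1 hu]
      _ = ∑ x, f x * u x := Equiv.sum_comp π (fun x => f x * u x)
  simp only [dotProduct, sub_mul, Finset.sum_sub_distrib, this, sub_self]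

theorem sameCycle_sq_iff [Finite H] {π : Perm H} {g : H → ZMod 2}
    (hg : ∀ x, g (π x) = g x + 1) {x y : H} :
    (π ^ 2).SameCycle x y ↔ π.SameCycle x y ∧ g x = g y := by
  have hpow := apply_pow_apply_eq_add_nsmul hg
  constructor
  · intro h
    obtain ⟨n, rfl⟩ := h.exists_nat_pow_eq
    refine ⟨h.of_pow, ?_⟩
    rw [← pow_mul, hpow, nsmul_eq_mul, mul_one, Nat.cast_mul, Nat.cast_two,
      show (2 : ZMod 2) = 0 from rfl, zero_mul, add_zero]
  · rintro ⟨h, hxy⟩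
    obtain ⟨n, rfl⟩ := h.exists_nat_pow_eq
    rw [hpow, nsmul_eq_mul, mul_one, left_eq_add, ZMod.natCast_eq_zero_iff_even] at hxy
    obtain ⟨m, rfl⟩ := hxy
    exact ⟨m, by rw [zpow_natCast, ← pow_mul, two_mul]⟩

theorem exists_apply_eq_add_one [Finite H] {σ : Perm H} (hσ : ∀ x, σ (σ x) = x)
    (hfix : ∀ x, σ x ≠ x) : ∃ c : H → ZMod 2, ∀ x, c (σ x) = c x + 1 := by
  classical
  have : Fintype H := Fintype.ofFinite H
  let e := Fintype.equivFin H
  refine ⟨fun x => if e x < e (σ x) then 1 else 0, fun x => ?_⟩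
  rcases lt_or_gt_of_ne (e.injective.ne (hfix x)) with h | h <;>
    simp only [hσ, h, h.not_gt, ↓reduceIte] <;> decide

end Equiv.Perm

namespace RibbonGraph

open Equiv.Perm

variable {H : Type} (G : RibbonGraph H)

theorem eq_of_sigma_rho_invariant {α : Type*} {f : H → α} (hσ : ∀ x, f (G.sigma x) = f x)
    (hρ : ∀ x, f (G.rho x) = f x) (x y : H) : f x = f y := by
  induction G.conn x y with
  | rel a b h => rcases h with rfl | rfl <;> simp only [hσ, hρ]
  | refl => rfl
  | symm _ _ _ ih => exact ih.symm
  | trans _ _ _ _ _ ih₁ ih₂ => exact ih₁.trans ih₂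

variable [Fintype H]

-- Over `ZMod 2`, `u ↦ u + u ∘ sigma` has both kernel and range equal to the `sigma`-invariant
-- functions; `c` provides the preimage `a * c` of an invariant `a`.
theorem card_eq_two_mul_numEdges : Fintype.card H = 2 * G.numEdges := by
  obtain ⟨c, hc⟩ := exists_apply_eq_add_one G.invol G.noFix
  let D : (H → ZMod 2) →ₗ[ZMod 2] (H → ZMod 2) :=
    LinearMap.id + LinearMap.funLeft _ _ G.sigma
  have hker : LinearMap.ker D = G.sigma.invariantFunctions (ZMod 2) := by
    ext u
    simp only [LinearMap.mem_ker, D, funext_iff, LinearMap.add_apply, LinearMap.id_apply,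
      LinearMap.funLeft_apply, Pi.add_apply, Pi.zero_apply, CharTwo.add_eq_zero,
      mem_invariantFunctions]
    exact forall_congr' fun _ => eq_comm
  have hrange : LinearMap.range D = G.sigma.invariantFunctions (ZMod 2) := by
    ext a
    constructor
    · rintro ⟨u, rfl⟩ x
      show u (G.sigma x) + u (G.sigma (G.sigma x)) = u x + u (G.sigma x)
      rw [G.invol, add_comm]
    · intro ha
      refine ⟨a * c, funext fun x => ?_⟩
      show a x * c x + a (G.sigma x) * c (G.sigma x) = a x
      rw [mem_invariantFunctions.1 ha x, hc x]
      linear_combination a x * c x * CharTwo.two_eq_zero (R := ZMod 2)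
  have := D.finrank_range_add_finrank_ker
  rw [hker, hrange, finrank_invariantFunctions, finrank_fintype_fun_eq_card] at this
  rw [← this, numEdges, two_mul]

theorem finrank_invariantFunctions_sigma_inf_rho_le_one (K : Type*) [Field K] :
    finrank K ↥(G.sigma.invariantFunctions K ⊓ G.rho.invariantFunctions K) ≤ 1 := by
  rcases isEmpty_or_nonempty H with _ | ⟨⟨x₀⟩⟩
  · exact (Submodule.finrank_le _).trans (by simp)
  · refine finrank_le_one ⟨1, fun _ => rfl, fun _ => rfl⟩ fun f => ⟨f.1 x₀, ?_⟩
    ext x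
    simpa using G.eq_of_sigma_rho_invariant f.2.1 f.2.2 x₀ x

theorem invariantFunctions_sigma_sup_rho_eq_top (K : Type*) [Field K] (hTree : G.IsTree) :
    G.sigma.invariantFunctions K ⊔ G.rho.invariantFunctions K = ⊤ := by
  apply Submodule.eq_top_of_finrank_eq
  have hσ : finrank K (G.sigma.invariantFunctions K) = G.numEdges := finrank_invariantFunctions _
  have hρ : finrank K (G.rho.invariantFunctions K) = G.numVertices := finrank_invariantFunctions _
  have hsum := Submodule.finrank_sup_add_finrank_inf_eq
    (G.sigma.invariantFunctions K) (G.rho.invariantFunctions K)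
  have hinf := G.finrank_invariantFunctions_sigma_inf_rho_le_one K
  have hle := Submodule.finrank_le (G.sigma.invariantFunctions K ⊔ G.rho.invariantFunctions K)
  have hVE : G.numVertices = G.numEdges + 1 := hTree
  rw [finrank_fintype_fun_eq_card, G.card_eq_two_mul_numEdges] at hle ⊢
  omega

theorem exists_sigma_add_rho_invariant {K : Type*} [Field K] (hTree : G.IsTree) (f : H → K) :
    ∃ a ∈ G.sigma.invariantFunctions K, ∃ b ∈ G.rho.invariantFunctions K, a + b = f :=
  Submodule.mem_sup.1 (G.invariantFunctions_sigma_sup_rho_eq_top K hTree ▸ Submodule.mem_top)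

theorem eq_of_stepC_invariant {K : Type*} [Field K] (hTree : G.IsTree) {f : H → K}
    (hf : ∀ x, f (G.stepC x) = f x) (x y : H) : f x = f y := by
  have hσρ : ∀ z, f (G.sigma z) = f (G.rho z) := fun z => by
    simpa [stepC] using hf (G.rho z)
  obtain ⟨a, ha, b, hb, rfl⟩ := G.exists_sigma_add_rho_invariant hTree f
  have hab : (fun z => a (G.rho z) - a z) = fun z => b (G.sigma z) - b z := by
    funext z
    have := hσρ z
    simp only [Pi.add_apply, mem_invariantFunctions.1 ha, mem_invariantFunctions.1 hb] at this
    linear_combination -this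
  have haρ : (fun z => a (G.rho z) - a z) = 0 := dotProduct_eq_zero _ fun u => by
    obtain ⟨a', ha', b', hb', rfl⟩ := G.exists_sigma_add_rho_invariant hTree u
    rw [dotProduct_add, dotProduct_sub_comp_eq_zero a hb', hab,
      dotProduct_sub_comp_eq_zero b ha', zero_add]
  have hfρ : ∀ z, (a + b) (G.rho z) = (a + b) z := fun z => by
    simp [sub_eq_zero.1 (congrFun haρ z), mem_invariantFunctions.1 hb z]
  exact G.eq_of_sigma_rho_invariant (fun z => (hσρ z).trans (hfρ z)) hfρ x y

theorem stepC_sameCycle (hTree : G.IsTree) (x y : H) : G.stepC.SameCycle x y := by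
  classical
  by_contra hxy
  have := G.eq_of_stepC_invariant hTree
    (f := fun z => if G.stepC.SameCycle x z then (1 : ZMod 2) else 0)
    (fun z => by simp only [sameCycle_apply_right]) x y
  simp [hxy, SameCycle.refl] at this

theorem exists_bipartition (hTree : G.IsTree) :
    ∃ g : H → ZMod 2, (∀ x, g (G.rho x) = g x) ∧ ∀ x, g (G.sigma x) = g x + 1 := by
  obtain ⟨c, hc⟩ := exists_apply_eq_add_one G.invol G.noFix
  obtain ⟨a, ha, b, hb, rfl⟩ := G.exists_sigma_add_rho_invariant hTree c
  refine ⟨b, hb, fun x => ?_⟩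
  have := hc x
  simp only [Pi.add_apply, mem_invariantFunctions.1 ha] at this
  linear_combination this

end RibbonGraph

theorem tree_clockwise_green_walk_half_edges_general
    (H : Type) [Fintype H] (G : RibbonGraph H) (hTree : G.IsTree) :
    (∀ x y : H, G.stepC.SameCycle x y) ∧
      (∀ x y : H,
        (G.stepC ^ 2).SameCycle x y ↔ ¬ (G.stepC ^ 2).SameCycle x (G.sigma y)) := by
  obtain ⟨g, hgρ, hgσ⟩ := G.exists_bipartition hTree
  have hg : ∀ x, g (G.stepC x) = g x + 1 := fun x => by
    simpa [RibbonGraph.stepC, hgσ] using (hgρ (G.rho.symm x)).symm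
  refine ⟨G.stepC_sameCycle hTree, fun x y => ?_⟩
  rw [Equiv.Perm.sameCycle_sq_iff hg, Equiv.Perm.sameCycle_sq_iff hg, hgσ]
  simp only [G.stepC_sameCycle hTree x, true_and]
  generalize g x = a
  generalize g y = b
  revert a b
  decide

/-- A clockwise Green walk around a finite tree visits both
half-edges of every edge (it is a single walk through all half-edges), and
consequently a clockwise double-stepped Green walk visits exactly one half-edge of
each edge of the tree: for every half-edge `y`, exactly one of `y`, `sigma y` lies
on the clockwise double-stepped Green walk through `x`. -/
theorem tree_clockwise_green_walk_half_edges
    (H : Type) [Fintype H] [Nonempty H] (G : RibbonGraph H) (hTree : G.IsTree) :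
    (∀ x y : H, G.stepC.SameCycle x y) ∧
      (∀ x y : H,
        (G.stepC ^ 2).SameCycle x y ↔ ¬ (G.stepC ^ 2).SameCycle x (G.sigma y)) :=
  tree_clockwise_green_walk_half_edges_general H G hTree
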